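/- arXiv:1907.00702 — 12 statements merged into one kernel-verified Lean document; each statement's English description precedes it below -/
import Mathlib

section
/- A binary relation α ⊆ X × X is nondegenerate (i.e., there exists β ⊆ X × X satisfying the snake identities) if and only if there exists a bijective map f : X → X such that α = {(x, f(x)) | x ∈ X}. -/
/-- A binary relation α ⊆ X × X is nondegenerate (there exists β
satisfying the snake identities) iff there is a bijection `f : X → X` with
`α = {(x, f x) | x ∈ X}`. -/
theorem stmt0 {X : Type*} (α : X → X → Prop) :
    (∃ β : X → X → Prop,
      (∀ x y, (∃ z, α x z ∧ β z y) ↔ x = y) ∧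
      (∀ x y, (∃ z, α z x ∧ β y z) ↔ x = y)) ↔
    (∃ f : X → X, Function.Bijective f ∧ ∀ x y, α x y ↔ y = f x) := by
  constructor
  · rintro ⟨β, h1, h2⟩
    -- totality
    have C : ∀ x, ∃ w, α x w ∧ β w x := fun x => (h1 x x).mpr rfl
    have D : ∀ y, ∃ z, α z y ∧ β y z := fun y => (h2 y y).mpr rfl
    -- functionality
    have func : ∀ x y y', α x y → α x y' → y = y' := by
      intro x y y' hy hy'
      obtain ⟨w, hw, hbw⟩ := C x
      have e1 : y = w := (h2 y w).mp ⟨x, hy, hbw⟩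
      have e2 : y' = w := (h2 y' w).mp ⟨x, hy', hbw⟩
      rw [e1, e2]
    choose f hf using fun x => (C x)
    refine ⟨f, ⟨?_, ?_⟩, ?_⟩
    · intro x x' hxx'
      obtain ⟨z, hz, hbz⟩ := D (f x)
      have e1 : x = z := (h1 x z).mp ⟨f x, (hf x).1, hbz⟩
      have e2 : x' = z := (h1 x' z).mp ⟨f x', (hf x').1, hxx' ▸ hbz⟩
      rw [e1, e2]
    · intro y
      obtain ⟨z, hz, _⟩ := D y
      exact ⟨z, func z (f z) y (hf z).1 hz⟩
    · intro x y
      exact ⟨fun h => func x y (f x) h (hf x).1, fun h => h ▸ (hf x).1⟩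
  · rintro ⟨f, ⟨hinj, hsurj⟩, hα⟩
    refine ⟨fun a b => a = f b, fun x y => ?_, fun x y => ?_⟩
    · constructor
      · rintro ⟨z, hz, hz'⟩
        exact hinj ((hα x z).mp hz ▸ hz')
      · rintro rfl
        exact ⟨f x, (hα x (f x)).mpr rfl, rfl⟩
    · constructor
      · rintro ⟨z, hz, hz'⟩
        rw [(hα z x).mp hz, hz']
      · rintro rfl
        obtain ⟨z, hz⟩ := hsurj x
        exact ⟨z, (hα z x).mpr hz.symm, hz.symm⟩
end

section
/- Let (X, ε, η, δ, μ) be a Frobenius object in Rel. Then the relation α := ε ∘ μ ⊆ X × X is nondegenerate, with witness β := δ ∘ η. -/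
/-- For a Frobenius object (X, ε, η, δ, μ) in Rel, the relation
`α := ε ∘ μ` is nondegenerate, with witness `β := δ ∘ η`. -/
theorem stmt2 {X : Type*} (ε η : X → Prop) (δ μ : X → X → X → Prop)
    (hU1 : ∀ x z, (∃ u, η u ∧ μ u x z) ↔ x = z)
    (hU2 : ∀ x z, (∃ u, η u ∧ μ x u z) ↔ x = z)
    (hC1 : ∀ x z, (∃ w, ε w ∧ δ x w z) ↔ x = z)
    (hC2 : ∀ x z, (∃ w, ε w ∧ δ x z w) ↔ x = z)
    (hF1 : ∀ x₁ x₂ x₃ x₄,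
      (∃ w, δ x₁ x₃ w ∧ μ w x₂ x₄) ↔ (∃ w, μ x₁ x₂ w ∧ δ w x₃ x₄))
    (hF2 : ∀ x₁ x₂ x₃ x₄,
      (∃ w, μ x₁ x₂ w ∧ δ w x₃ x₄) ↔ (∃ w, δ x₂ x₃ w ∧ μ x₁ w x₄)) :
    (∀ x y, (∃ z, (∃ v, μ x z v ∧ ε v) ∧ (∃ u, η u ∧ δ u z y)) ↔ x = y) ∧
    (∀ x y, (∃ z, (∃ v, μ z x v ∧ ε v) ∧ (∃ u, η u ∧ δ u y z)) ↔ x = y) := by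
  constructor
  · intro x y
    constructor
    · rintro ⟨z, ⟨v, hμ, hv⟩, ⟨u, hu, hδ⟩⟩
      -- μ u u u
      obtain ⟨a, ha, hua⟩ := (hU2 u u).mpr rfl
      have hau : a = u := (hU1 a u).mp ⟨u, hu, hua⟩
      rw [hau] at hua
      -- ε f, δ y y f
      obtain ⟨f, hf, hyy⟩ := (hC2 y y).mpr rfl
      -- μ u y y
      obtain ⟨w₁, hδ1, hμ1⟩ := (hF2 u u z y).mp ⟨u, hua, hδ⟩
      have hw₁ : w₁ = y := (hU1 w₁ y).mp ⟨u, hu, hμ1⟩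
      rw [hw₁] at hμ1
      -- μ u f f
      obtain ⟨w₂, hδ2, hμ2⟩ := (hF2 u y y f).mp ⟨y, hμ1, hyy⟩
      have hw₂ : w₂ = f := (hU1 w₂ f).mp ⟨u, hu, hμ2⟩
      rw [hw₂] at hμ2
      -- δ u y g ∧ μ g y f
      obtain ⟨g, hg1, hg2⟩ := (hF1 u y y f).mpr ((hF2 u y y f).mpr ⟨f, hyy, hμ2⟩)
      -- δ g z h ∧ μ h u f, with h = f, hence g = z
      obtain ⟨h, hh1, hh2⟩ := (hF1 g u z f).mpr ((hF2 g u z f).mpr ⟨y, hδ, hg2⟩)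
      have hhf : h = f := (hU2 h f).mp ⟨u, hu, hh2⟩
      rw [hhf] at hh1
      have hgz : g = z := (hC2 g z).mp ⟨f, hf, hh1⟩
      rw [hgz] at hg1
      -- δ x y c ∧ μ c u v with c = v, hence x = y
      obtain ⟨c, hc1, hc2⟩ := (hF1 x u y v).mpr ((hF2 x u y v).mpr ⟨z, hg1, hμ⟩)
      have hcv : c = v := (hU2 c v).mp ⟨u, hu, hc2⟩
      rw [hcv] at hc1
      exact (hC2 x y).mp ⟨v, hv, hc1⟩
    · rintro rfl
      obtain ⟨s2, hs2, hxs2⟩ := (hU2 x x).mpr rfl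
      obtain ⟨s4, hs4, hxx4⟩ := (hC2 x x).mpr rfl
      obtain ⟨s16, h16a, h16b⟩ := (hF2 x s2 x s4).mp ⟨x, hxs2, hxx4⟩
      obtain ⟨s37, hs37, h37⟩ := (hU1 s16 s16).mpr rfl
      obtain ⟨s40, hs40, h40⟩ := (hC2 s16 s16).mpr rfl
      obtain ⟨s241, h241a, h241b⟩ := (hF1 s37 s16 s16 s40).mpr ⟨s16, h37, h40⟩
      obtain ⟨s550, h550a, h550b⟩ := (hF2 s241 s2 x s40).mpr ⟨s16, h16a, h241b⟩
      have e1 : s241 = s550 := (hU2 s241 s550).mp ⟨s2, hs2, h550a⟩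
      have e2 : s550 = x := (hC2 s550 x).mp ⟨s40, hs40, h550b⟩
      refine ⟨s16, ⟨s4, h16b, hs4⟩, ⟨s37, hs37, ?_⟩⟩
      rw [e1, e2] at h241a
      exact h241a
  · intro x y
    constructor
    · rintro ⟨z, ⟨v, hμ, hv⟩, ⟨u, hu, hδ⟩⟩
      obtain ⟨s, hs1, hs2⟩ := (hF1 u x y v).mp ⟨z, hδ, hμ⟩
      exact ((hU1 x s).mp ⟨u, hu, hs1⟩).trans ((hC2 s y).mp ⟨v, hv, hs2⟩)
    · rintro rfl
      obtain ⟨s1, hs1, h1⟩ := (hU1 x x).mpr rfl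
      obtain ⟨s4, hs4, h4⟩ := (hC2 x x).mpr rfl
      obtain ⟨s13, h13a, h13b⟩ := (hF1 s1 x x s4).mpr ⟨x, h1, h4⟩
      exact ⟨s13, ⟨s4, h13b, hs4⟩, ⟨s1, hs1, h13a⟩⟩
end

section
/- Let (X, ε, η, δ, μ) be a Frobenius object in Rel, and let f : X → X be the bijection with ε ∘ μ = {(x, f(x)) | x ∈ X}. Then for all x ∈ X: x ∈ η if and only if f(x) ∈ ε, and x ∈ ε if and only if f(x) ∈ η. -/
/-- For a Frobenius object in Rel with associated bijection f,
`x ∈ η ↔ f x ∈ ε` and `x ∈ ε ↔ f x ∈ η`. -/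
theorem stmt3 {X : Type*} (ε η : X → Prop) (δ μ : X → X → X → Prop)
    (f : X → X)
    (hU1 : ∀ x z, (∃ u, η u ∧ μ u x z) ↔ x = z)
    (hU2 : ∀ x z, (∃ u, η u ∧ μ x u z) ↔ x = z)
    (hC1 : ∀ x z, (∃ w, ε w ∧ δ x w z) ↔ x = z)
    (hC2 : ∀ x z, (∃ w, ε w ∧ δ x z w) ↔ x = z)
    (hF1 : ∀ x₁ x₂ x₃ x₄,
      (∃ w, δ x₁ x₃ w ∧ μ w x₂ x₄) ↔ (∃ w, μ x₁ x₂ w ∧ δ w x₃ x₄))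
    (hF2 : ∀ x₁ x₂ x₃ x₄,
      (∃ w, μ x₁ x₂ w ∧ δ w x₃ x₄) ↔ (∃ w, δ x₂ x₃ w ∧ μ x₁ w x₄))
    (hf : Function.Bijective f)
    (hα : ∀ x y, (∃ z, μ x y z ∧ ε z) ↔ y = f x)
    (hβ : ∀ y z, (∃ x, η x ∧ δ x y z) ↔ y = f z) :
    ∀ x, (η x ↔ ε (f x)) ∧ (ε x ↔ η (f x)) := by
  intro x
  constructor
  · constructor
    · intro hx
      obtain ⟨w, hw, hd⟩ := (hC1 x x).mpr rfl
      have : w = f x := (hβ w x).mp ⟨x, hx, hd⟩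
      rwa [← this]
    · intro hfx
      obtain ⟨u, hu, hd⟩ := (hβ (f x) x).mpr rfl
      have : u = x := (hC1 u x).mp ⟨f x, hfx, hd⟩
      rwa [← this]
  · constructor
    · intro hx
      obtain ⟨u, hu, hm⟩ := (hU2 x x).mpr rfl
      have : u = f x := (hα x u).mp ⟨x, hm, hx⟩
      rwa [← this]
    · intro hfx
      obtain ⟨z, hm, hz⟩ := (hα x (f x)).mpr rfl
      have : x = z := (hU2 x z).mp ⟨f x, hfx, hm⟩
      rwa [this]
end

section
/- Let (X, ε, η, δ, μ) be a Frobenius object in Rel with associated bijection f. Then the relation {(x,y,z) | ∃ w, (x,z,w) ∈ δ ∧ (w,y) ∈ ε∘μ-graph, i.e., w ∈ X with f(w) = y} equals μ; concretely, (1 × α) ∘ (δ × 1) = μ, where α = {(x, f(x)) | x ∈ X}. -/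
/-- For a Frobenius object in Rel with associated bijection f,
`(1 × α) ∘ (δ × 1) = μ`, i.e. `(x,y,z) ∈ μ ↔ ∃ w, (x,z,w) ∈ δ ∧ f w = y`. -/
theorem stmt4 {X : Type*} (ε η : X → Prop) (δ μ : X → X → X → Prop)
    (f : X → X)
    (hU1 : ∀ x z, (∃ u, η u ∧ μ u x z) ↔ x = z)
    (hU2 : ∀ x z, (∃ u, η u ∧ μ x u z) ↔ x = z)
    (hC1 : ∀ x z, (∃ w, ε w ∧ δ x w z) ↔ x = z)
    (hC2 : ∀ x z, (∃ w, ε w ∧ δ x z w) ↔ x = z)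
    (hF1 : ∀ x₁ x₂ x₃ x₄,
      (∃ w, δ x₁ x₃ w ∧ μ w x₂ x₄) ↔ (∃ w, μ x₁ x₂ w ∧ δ w x₃ x₄))
    (hF2 : ∀ x₁ x₂ x₃ x₄,
      (∃ w, μ x₁ x₂ w ∧ δ w x₃ x₄) ↔ (∃ w, δ x₂ x₃ w ∧ μ x₁ w x₄))
    (hf : Function.Bijective f)
    (hα : ∀ x y, (∃ z, μ x y z ∧ ε z) ↔ y = f x)
    (hβ : ∀ y z, (∃ x, η x ∧ δ x y z) ↔ y = f z) :
    ∀ x y z, μ x y z ↔ ∃ w, δ x z w ∧ f w = y := by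
  intro x y z
  constructor
  · intro h
    obtain ⟨c, hεc, hδ⟩ := (hC2 z z).mpr rfl
    obtain ⟨w, hδw, hμw⟩ := (hF1 x y z c).mpr ⟨z, h, hδ⟩
    exact ⟨w, hδw, ((hα w y).mp ⟨c, hμw, hεc⟩).symm⟩
  · rintro ⟨w, hδw, hfw⟩
    obtain ⟨c, hμ, hε⟩ := (hα w y).mpr hfw.symm
    obtain ⟨v, hμv, hδv⟩ := (hF1 x y z c).mp ⟨w, hδw, hμ⟩
    have hv : v = z := (hC2 v z).mp ⟨c, hε, hδv⟩
    exact hv ▸ hμv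
end

section
/- Let (X, ε, η, δ, μ) be a Frobenius object in Rel with associated bijection f. Then for all (x,y,z) ∈ X³, the following are equivalent: (1) (x,y,z) ∈ μ; (2) (y, f(x), z) ∈ δ; (3) (x, z, f⁻¹(y)) ∈ δ. -/
/-- For a Frobenius object in Rel with associated bijection f
(with inverse g), the following are equivalent:
(1) (x,y,z) ∈ μ; (2) (y, f x, z) ∈ δ; (3) (x, z, f⁻¹ y) ∈ δ. -/
theorem stmt5 {X : Type*} (ε η : X → Prop) (δ μ : X → X → X → Prop)
    (f g : X → X)
    (hU1 : ∀ x z, (∃ u, η u ∧ μ u x z) ↔ x = z)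
    (hU2 : ∀ x z, (∃ u, η u ∧ μ x u z) ↔ x = z)
    (hC1 : ∀ x z, (∃ w, ε w ∧ δ x w z) ↔ x = z)
    (hC2 : ∀ x z, (∃ w, ε w ∧ δ x z w) ↔ x = z)
    (hF1 : ∀ x₁ x₂ x₃ x₄,
      (∃ w, δ x₁ x₃ w ∧ μ w x₂ x₄) ↔ (∃ w, μ x₁ x₂ w ∧ δ w x₃ x₄))
    (hF2 : ∀ x₁ x₂ x₃ x₄,
      (∃ w, μ x₁ x₂ w ∧ δ w x₃ x₄) ↔ (∃ w, δ x₂ x₃ w ∧ μ x₁ w x₄))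
    (hf : Function.Bijective f)
    (hgf : ∀ x, g (f x) = x) (hfg : ∀ x, f (g x) = x)
    (hα : ∀ x y, (∃ z, μ x y z ∧ ε z) ↔ y = f x)
    (hβ : ∀ y z, (∃ x, η x ∧ δ x y z) ↔ y = f z) :
    ∀ x y z, (μ x y z ↔ δ y (f x) z) ∧ (μ x y z ↔ δ x z (g y)) := by
  intro x y z
  constructor
  · constructor
    · intro hμ
      -- get u with η u and δ u (f x) x
      obtain ⟨u, hu, hδu⟩ := (hβ (f x) x).mpr rfl
      -- hF1 with x₁ = u, x₂ = y, x₃ = f x, x₄ = z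
      obtain ⟨w, hw1, hw2⟩ := (hF1 u y (f x) z).mp ⟨x, hδu, hμ⟩
      have : y = w := (hU1 y w).mp ⟨u, hu, hw1⟩
      rwa [this]
    · intro hδ
      obtain ⟨u, hu, hμu⟩ := (hU1 y y).mpr rfl
      obtain ⟨w, hw1, hw2⟩ := (hF1 u y (f x) z).mpr ⟨y, hμu, hδ⟩
      have hfx : f x = f w := (hβ (f x) w).mp ⟨u, hu, hw1⟩
      have : x = w := hf.injective hfx
      rwa [this]
  · constructor
    · intro hμ
      obtain ⟨c, hc, hδc⟩ := (hC2 z z).mpr rfl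
      obtain ⟨w, hw1, hw2⟩ := (hF1 x y z c).mpr ⟨z, hμ, hδc⟩
      have : y = f w := (hα w y).mp ⟨c, hw2, hc⟩
      have hwg : w = g y := by rw [this, hgf]
      rwa [hwg] at hw1
    · intro hδ
      have : y = f (g y) := (hfg y).symm
      obtain ⟨c, hμc, hc⟩ := (hα (g y) y).mpr this
      obtain ⟨w, hw1, hw2⟩ := (hF1 x y z c).mp ⟨g y, hδ, hμc⟩
      have : w = z := (hC2 w z).mp ⟨c, hc, hw2⟩
      rwa [this] at hw1
end

section
/- Let (X, ε, η, δ, μ) be a Frobenius object in Rel. Then μ is associative as a relation: {(x,y,z,w) | ∃ v, (y,z,v) ∈ μ ∧ (x,v,w) ∈ μ} = {(x,y,z,w) | ∃ v, (x,y,v) ∈ μ ∧ (v,z,w) ∈ μ}. -/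
/-- For a Frobenius object in Rel, μ is associative. -/
theorem stmt7 {X : Type*} (ε η : X → Prop) (δ μ : X → X → X → Prop)
    (hU1 : ∀ x z, (∃ u, η u ∧ μ u x z) ↔ x = z)
    (hU2 : ∀ x z, (∃ u, η u ∧ μ x u z) ↔ x = z)
    (hC1 : ∀ x z, (∃ w, ε w ∧ δ x w z) ↔ x = z)
    (hC2 : ∀ x z, (∃ w, ε w ∧ δ x z w) ↔ x = z)
    (hF1 : ∀ x₁ x₂ x₃ x₄,
      (∃ w, δ x₁ x₃ w ∧ μ w x₂ x₄) ↔ (∃ w, μ x₁ x₂ w ∧ δ w x₃ x₄))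
    (hF2 : ∀ x₁ x₂ x₃ x₄,
      (∃ w, μ x₁ x₂ w ∧ δ w x₃ x₄) ↔ (∃ w, δ x₂ x₃ w ∧ μ x₁ w x₄)) :
    ∀ x y z w, (∃ v, μ y z v ∧ μ x v w) ↔ (∃ v, μ x y v ∧ μ v z w) := by
  -- β a b := ∃ e, ε e ∧ μ a b e ;  α a b := ∃ u, η u ∧ δ u a b
  -- M1 : μ a b c ↔ ∃ w, δ a c w ∧ β w b
  have M1 : ∀ a b c, μ a b c ↔ ∃ w, δ a c w ∧ ∃ e, ε e ∧ μ w b e := by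
    intro a b c
    constructor
    · intro h
      obtain ⟨e, he, hd⟩ := (hC2 c c).mpr rfl
      obtain ⟨w, hw1, hw2⟩ := (hF1 a b c e).mpr ⟨c, h, hd⟩
      exact ⟨w, hw1, e, he, hw2⟩
    · rintro ⟨w, hw, e, he, hm⟩
      obtain ⟨m, hm1, hm2⟩ := (hF1 a b c e).mp ⟨w, hw, hm⟩
      have hmc : m = c := (hC2 m c).mp ⟨e, he, hm2⟩
      exact hmc ▸ hm1
  -- M2 : μ a b c ↔ ∃ w, δ b c w ∧ β a w
  have M2 : ∀ a b c, μ a b c ↔ ∃ w, δ b c w ∧ ∃ e, ε e ∧ μ a w e := by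
    intro a b c
    constructor
    · intro h
      obtain ⟨e, he, hd⟩ := (hC2 c c).mpr rfl
      obtain ⟨w, hw1, hw2⟩ := (hF2 a b c e).mp ⟨c, h, hd⟩
      exact ⟨w, hw1, e, he, hw2⟩
    · rintro ⟨w, hw, e, he, hm⟩
      obtain ⟨m, hm1, hm2⟩ := (hF2 a b c e).mpr ⟨w, hw, hm⟩
      have hmc : m = c := (hC2 m c).mp ⟨e, he, hm2⟩
      exact hmc ▸ hm1
  -- S2 : δ x a z ↔ ∃ w, α a w ∧ μ x w z
  have S2 : ∀ x a z, δ x a z ↔ ∃ w, (∃ u, η u ∧ δ u a w) ∧ μ x w z := by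
    intro x a z
    constructor
    · intro h
      obtain ⟨u, hu, hmu⟩ := (hU2 x x).mpr rfl
      obtain ⟨w, hw1, hw2⟩ := (hF2 x u a z).mp ⟨x, hmu, h⟩
      exact ⟨w, ⟨u, hu, hw1⟩, hw2⟩
    · rintro ⟨w, ⟨u, hu, hd⟩, hm⟩
      obtain ⟨m, hm1, hm2⟩ := (hF2 x u a z).mpr ⟨w, hd, hm⟩
      have hxm : x = m := (hU2 x m).mp ⟨u, hu, hm1⟩
      exact hxm ▸ hm2
  -- N2' : (∃ w, α z w ∧ β x w) ↔ x = z
  have N2 : ∀ x z, (∃ w, (∃ u, η u ∧ δ u z w) ∧ ∃ e, ε e ∧ μ x w e) ↔ x = z := by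
    intro x z
    constructor
    · rintro ⟨w, ⟨u, hu, hd⟩, hb⟩
      have hm : μ x u z := (M2 x u z).mpr ⟨w, hd, hb⟩
      exact (hU2 x z).mp ⟨u, hu, hm⟩
    · rintro rfl
      obtain ⟨u, hu, hmu⟩ := (hU2 x x).mpr rfl
      obtain ⟨w, hw1, hw2⟩ := (M2 x u x).mp hmu
      exact ⟨w, ⟨u, hu, hw1⟩, hw2⟩
  -- N3 : ∀ x, ∃ w, α x w ∧ β x w
  have N3 : ∀ x, ∃ w, (∃ u, η u ∧ δ u x w) ∧ ∃ e, ε e ∧ μ x w e := by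
    intro x
    obtain ⟨u, hu, hmu⟩ := (hU2 x x).mpr rfl
    obtain ⟨e, he, hd⟩ := (hC2 x x).mpr rfl
    obtain ⟨w, hw1, hw2⟩ := (hF2 x u x e).mp ⟨x, hmu, hd⟩
    exact ⟨w, ⟨u, hu, hw1⟩, e, he, hw2⟩
  -- atot : ∀ b, ∃ z, α z b
  have atot : ∀ b, ∃ z u, η u ∧ δ u z b := by
    intro b
    obtain ⟨w, ⟨u₀, hu₀, hδ₀⟩, _⟩ := N3 b
    obtain ⟨w₁, ⟨u₁, hu₁, hδ₁⟩, ⟨e₁, he₁, hμ₁⟩⟩ := N3 w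
    obtain ⟨m, hm1, hm2⟩ := (hF1 u₀ w₁ b e₁).mp ⟨w, hδ₀, hμ₁⟩
    have h1 : w₁ = m := (hU1 w₁ m).mp ⟨u₀, hu₀, hm1⟩
    have h2 : w₁ = b := (hC2 w₁ b).mp ⟨e₁, he₁, h1 ▸ hm2⟩
    exact ⟨w, u₁, hu₁, h2 ▸ hδ₁⟩
  -- AB : α a b → β b a
  have AB : ∀ a b, (∃ u, η u ∧ δ u a b) → ∃ e, ε e ∧ μ b a e := by
    rintro a b ⟨u, hu, hd⟩
    obtain ⟨w₂, ⟨u₂, hu₂, hδ₂⟩, ⟨e₂, he₂, hμ₂⟩⟩ := N3 b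
    obtain ⟨m, hm1, hm2⟩ := (hF1 u w₂ a e₂).mp ⟨b, hd, hμ₂⟩
    have h1 : w₂ = m := (hU1 w₂ m).mp ⟨u, hu, hm1⟩
    have h2 : w₂ = a := (hC2 w₂ a).mp ⟨e₂, he₂, h1 ▸ hm2⟩
    exact ⟨e₂, he₂, h2 ▸ hμ₂⟩
  -- BA : β t x → α x t
  have BA : ∀ t x, (∃ e, ε e ∧ μ t x e) → ∃ u, η u ∧ δ u x t := by
    rintro t x ⟨e, he, hm⟩
    obtain ⟨s, u₁, hu₁, hδ₁⟩ := atot t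
    obtain ⟨m, hm1, hm2⟩ := (hF1 u₁ x s e).mp ⟨t, hδ₁, hm⟩
    have h1 : x = m := (hU1 x m).mp ⟨u₁, hu₁, hm1⟩
    have h2 : x = s := (hC2 x s).mp ⟨e, he, h1 ▸ hm2⟩
    exact ⟨u₁, hu₁, h2 ▸ hδ₁⟩
  -- SYM : β a b → β b a
  have SYM : ∀ a b, (∃ e, ε e ∧ μ a b e) → ∃ e, ε e ∧ μ b a e := by
    intro a b hb
    obtain ⟨z, u, hu, hd⟩ := atot b
    have haz : a = z := (N2 a z).mp ⟨b, ⟨u, hu, hd⟩, hb⟩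
    exact AB a b ⟨u, hu, haz ▸ hd⟩
  -- αfunc : α t v → α t x → v = x
  have afunc : ∀ t v x, (∃ u, η u ∧ δ u t v) → (∃ u, η u ∧ δ u t x) → v = x := by
    intro t v x h1 h2
    have hb1 : ∃ e, ε e ∧ μ v t e := AB t v h1
    have hb2 : ∃ e, ε e ∧ μ x t e := AB t x h2
    have hb3 : ∃ e, ε e ∧ μ t x e := SYM x t hb2
    have ha : ∃ u, η u ∧ δ u x t := BA t x hb3
    exact (N2 v x).mp ⟨t, ha, hb1⟩
  -- CS1 : α t v → β t x → v = x
  have CS1 : ∀ t v x, (∃ u, η u ∧ δ u t v) → (∃ e, ε e ∧ μ t x e) → v = x := by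
    intro t v x ha hb
    have hb' : ∃ e, ε e ∧ μ x t e := SYM t x hb
    have ha' : ∃ u, η u ∧ δ u t x := BA x t hb'
    exact afunc t v x ha ha'
  -- CS2 : ∀ x, ∃ t, α t x ∧ β t x
  have CS2 : ∀ x, ∃ t, (∃ u, η u ∧ δ u t x) ∧ ∃ e, ε e ∧ μ t x e := by
    intro x
    obtain ⟨w, ha, hb⟩ := N3 x
    exact ⟨w, BA x w hb, SYM x w hb⟩
  -- CYC one direction : (∃ t, μ s z t ∧ β t x) → (∃ t, μ z x t ∧ β t s)
  have CYC : ∀ s z x, (∃ t, μ s z t ∧ ∃ e, ε e ∧ μ t x e) →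
      ∃ t, μ z x t ∧ ∃ e, ε e ∧ μ t s e := by
    rintro s z x ⟨t, hm, hbx⟩
    obtain ⟨q, hq1, hq2⟩ := (M2 s z t).mp hm
    obtain ⟨v, hv1, hv2⟩ := (S2 z t q).mp hq1
    have hvx : v = x := CS1 t v x hv1 hbx
    exact ⟨q, hvx ▸ hv2, SYM s q hq2⟩
  -- BAL : (∃ t, μ s z t ∧ β x t) ↔ (∃ t, μ x s t ∧ β t z)
  have BAL : ∀ x s z, (∃ t, μ s z t ∧ ∃ e, ε e ∧ μ x t e) ↔
      ∃ t, μ x s t ∧ ∃ e, ε e ∧ μ t z e := by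
    intro x s z
    constructor
    · rintro ⟨t, hm, hb⟩
      have h1 : ∃ t, μ s z t ∧ ∃ e, ε e ∧ μ t x e := ⟨t, hm, SYM x t hb⟩
      exact CYC z x s (CYC s z x h1)
    · rintro ⟨t, hm, hb⟩
      obtain ⟨t', hm', hb'⟩ := CYC x s z ⟨t, hm, hb⟩
      exact ⟨t', hm', SYM t' x hb'⟩
  -- main
  intro x y z w
  constructor
  · rintro ⟨v, hyz, hxv⟩
    obtain ⟨t, ht1, ht2⟩ := (M2 x v w).mp hxv
    obtain ⟨s, hs1, hs2⟩ := (hF1 y z w t).mpr ⟨v, hyz, ht1⟩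
    obtain ⟨t', ht'1, ht'2⟩ := (BAL x s z).mp ⟨t, hs2, ht2⟩
    obtain ⟨v', hv'1, hv'2⟩ := (hF2 x y w t').mpr ⟨s, hs1, ht'1⟩
    exact ⟨v', hv'1, (M1 v' z w).mpr ⟨t', hv'2, ht'2⟩⟩
  · rintro ⟨v, hxy, hvz⟩
    obtain ⟨t, ht1, ht2⟩ := (M1 v z w).mp hvz
    obtain ⟨s, hs1, hs2⟩ := (hF2 x y w t).mp ⟨v, hxy, ht1⟩
    obtain ⟨t', ht'1, ht'2⟩ := (BAL x s z).mpr ⟨t, hs2, ht2⟩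
    obtain ⟨v', hv'1, hv'2⟩ := (hF1 y z w t').mp ⟨s, hs1, ht'1⟩
    exact ⟨v', hv'1, (M2 x v' w).mpr ⟨t', hv'2, ht'2⟩⟩
end

section
/- Let (X, ε, η, δ, μ) be a Frobenius object in Rel. Then δ is coassociative as a relation: {(x,y,z,w) | ∃ v, (x,v,w) ∈ δ ∧ (v,y,z) ∈ δ} = {(x,y,z,w) | ∃ v, (x,y,v) ∈ δ ∧ (v,z,w) ∈ δ}. -/
/-- For a Frobenius object in Rel, δ is coassociative. -/
theorem stmt8 {X : Type*} (ε η : X → Prop) (δ μ : X → X → X → Prop)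
    (hU1 : ∀ x z, (∃ u, η u ∧ μ u x z) ↔ x = z)
    (hU2 : ∀ x z, (∃ u, η u ∧ μ x u z) ↔ x = z)
    (hC1 : ∀ x z, (∃ w, ε w ∧ δ x w z) ↔ x = z)
    (hC2 : ∀ x z, (∃ w, ε w ∧ δ x z w) ↔ x = z)
    (hF1 : ∀ x₁ x₂ x₃ x₄,
      (∃ w, δ x₁ x₃ w ∧ μ w x₂ x₄) ↔ (∃ w, μ x₁ x₂ w ∧ δ w x₃ x₄))
    (hF2 : ∀ x₁ x₂ x₃ x₄,
      (∃ w, μ x₁ x₂ w ∧ δ w x₃ x₄) ↔ (∃ w, δ x₂ x₃ w ∧ μ x₁ w x₄)) :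
    ∀ x y z w, (∃ v, δ x v w ∧ δ v y z) ↔ (∃ v, δ x y v ∧ δ v z w) := by
  -- Key lemma 1: the two outputs of δ can be swapped.
  have swap : ∀ a b c, δ a b c → δ a c b := by
    intro a b c h
    obtain ⟨u, hu, hmu⟩ := (hU2 c c).mpr rfl
    obtain ⟨e, he, hde⟩ := (hC2 c c).mpr rfl
    obtain ⟨t, hdt, hmt⟩ := (hF2 c u c e).mp ⟨c, hmu, hde⟩
    obtain ⟨s, hms, hds⟩ := (hF1 a t b e).mp ⟨c, h, hmt⟩
    have hsb : s = b := (hC2 s b).mp ⟨e, he, hds⟩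
    subst hsb
    obtain ⟨r, hmr, hdr⟩ := (hF2 a u c s).mpr ⟨t, hdt, hms⟩
    have har : a = r := (hU2 a r).mp ⟨u, hu, hmr⟩
    subst har
    exact hdr
  -- Key lemma 2: in a δ-δ composite through the last output, the first two
  -- outputs can be swapped.
  have T : ∀ x p q r, (∃ v, δ x p v ∧ δ v q r) → (∃ v, δ x q v ∧ δ v p r) := by
    intro x p q r hpq
    obtain ⟨v, h1, h2⟩ := hpq
    obtain ⟨u, hu, hux⟩ := (hU1 x x).mpr rfl
    obtain ⟨a, hda, hma⟩ := (hF1 u x p v).mpr ⟨x, hux, h1⟩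
    obtain ⟨t, hdt, hmt⟩ := (hF2 a x q r).mp ⟨v, hma, h2⟩
    obtain ⟨s, hms, hds⟩ := (hF1 u t p r).mp ⟨a, hda, hmt⟩
    have hts : t = s := (hU1 t s).mp ⟨u, hu, hms⟩
    subst hts
    exact ⟨t, hdt, hds⟩
  intro x y z w
  constructor
  · rintro ⟨v, h1, h2⟩
    obtain ⟨v', hx, hv⟩ := T x w y z ⟨v, swap x v w h1, h2⟩
    exact ⟨v', hx, swap v' w z hv⟩
  · rintro ⟨v, h1, h2⟩
    obtain ⟨t, hx, ht⟩ := T x y w z ⟨v, h1, swap v z w h2⟩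
    exact ⟨t, swap x w t hx, ht⟩
end

section
/- Let (X, ε, η, δ, μ) be a Frobenius object in Rel. Then for every x ∈ X there is a unique u ∈ η such that (x, u, x) ∈ μ, and there is a unique u' ∈ η such that (u', x, x) ∈ μ. -/
/-- For a Frobenius object in Rel, every x has a unique u ∈ η with
(x,u,x) ∈ μ and a unique u' ∈ η with (u',x,x) ∈ μ. -/
theorem stmt9 {X : Type*} (ε η : X → Prop) (δ μ : X → X → X → Prop)
    (hU1 : ∀ x z, (∃ u, η u ∧ μ u x z) ↔ x = z)
    (hU2 : ∀ x z, (∃ u, η u ∧ μ x u z) ↔ x = z)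
    (hC1 : ∀ x z, (∃ w, ε w ∧ δ x w z) ↔ x = z)
    (hC2 : ∀ x z, (∃ w, ε w ∧ δ x z w) ↔ x = z)
    (hF1 : ∀ x₁ x₂ x₃ x₄,
      (∃ w, δ x₁ x₃ w ∧ μ w x₂ x₄) ↔ (∃ w, μ x₁ x₂ w ∧ δ w x₃ x₄))
    (hF2 : ∀ x₁ x₂ x₃ x₄,
      (∃ w, μ x₁ x₂ w ∧ δ w x₃ x₄) ↔ (∃ w, δ x₂ x₃ w ∧ μ x₁ w x₄)) :
    ∀ x, (∃! u, η u ∧ μ x u x) ∧ (∃! u, η u ∧ μ u x x) := by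
  -- collapse lemmas
  have cU1 : ∀ {h a b}, η h → μ h a b → a = b := fun hh hm => (hU1 _ _).mp ⟨_, hh, hm⟩
  have cU2 : ∀ {h a b}, η h → μ a h b → a = b := fun hh hm => (hU2 _ _).mp ⟨_, hh, hm⟩
  have cC1 : ∀ {w a b}, ε w → δ a w b → a = b := fun hw hd => (hC1 _ _).mp ⟨_, hw, hd⟩
  have cC2 : ∀ {w a b}, ε w → δ a b w → a = b := fun hw hd => (hC2 _ _).mp ⟨_, hw, hd⟩
  -- every η-element is idempotent
  have idem : ∀ {u}, η u → μ u u u := by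
    intro u hu
    obtain ⟨h, hh, hm⟩ := (hU1 u u).mpr rfl
    have : h = u := cU2 hu hm
    exact this ▸ hm
  -- Lemma B: if u is a unit acting on a (μ a u a), e is an hC2-witness for a,
  -- and f is an hC1-witness for u, then μ e u e and e = f.
  have lemB : ∀ {u a e f}, η u → μ a u a → ε e → δ a a e → ε f → δ u f u →
      μ e u e ∧ e = f := by
    intro u a e f hu hm he hd hf hdf
    obtain ⟨p, hp1, hp2⟩ := (hF1 a u a e).mpr ⟨a, hm, hd⟩
    -- hp1 : δ a a p, hp2 : μ p u e
    have hpe : p = e := cU2 hu hp2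
    have hmu : μ e u e := hpe ▸ hp2
    obtain ⟨q, hq1, hq2⟩ := (hF2 e u f e).mpr ⟨u, hdf, hmu⟩
    -- hq1 : μ e u q, hq2 : δ q f e
    have hqe : q = e := (cU2 hu hq1).symm
    exact ⟨hmu, cC2 he (hqe ▸ hq2)⟩
  -- Lemma B2: if μ u x x, e is an hC2-witness for x and f an hC1-witness for u, then e = f.
  have lemB2 : ∀ {u x e f}, μ u x x → ε e → δ x x e → ε f → δ u f u → e = f := by
    intro u x e f hm he hd hf hdf
    obtain ⟨t, ht1, ht2⟩ := (hF2 u x x e).mp ⟨x, hm, hd⟩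
    -- ht1 : δ x x t, ht2 : μ u t e
    obtain ⟨q, hq1, hq2⟩ := (hF1 u t f e).mp ⟨u, hdf, ht2⟩
    -- hq1 : μ u t q, hq2 : δ q f e
    exact (cC1 hf hq2).symm.trans (cC2 he hq2)
  intro x
  -- the common ε-element e with δ x x e
  obtain ⟨e, he, hde⟩ := (hC2 x x).mpr rfl
  -- uniqueness, part 1
  have uniq1 : ∀ {u v}, η u → μ x u x → η v → μ x v x → u = v := by
    intro u v hu hmu hv hmv
    obtain ⟨fu, hfu, hdfu⟩ := (hC1 u u).mpr rfl
    obtain ⟨fv, hfv, hdfv⟩ := (hC1 v v).mpr rfl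
    obtain ⟨du, hdu, hddu⟩ := (hC2 u u).mpr rfl
    obtain ⟨_, heu⟩ := lemB hu hmu he hde hfu hdfu
    obtain ⟨hmev, hev⟩ := lemB hv hmv he hde hfv hdfv
    obtain ⟨_, hdufu⟩ := lemB hu (idem hu) hdu hddu hfu hdfu
    have hdue : du = e := hdufu.trans heu.symm
    have hdu_e : δ u u e := hdue ▸ hddu
    obtain ⟨t, ht1, ht2⟩ := (hF1 u v u e).mp ⟨e, hdu_e, hmev⟩
    exact (cU2 hv ht1).trans (cU1 hu ht1).symm
  -- uniqueness, part 2
  have uniq2 : ∀ {u v}, η u → μ u x x → η v → μ v x x → u = v := by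
    intro u v hu hmu hv hmv
    obtain ⟨fu, hfu, hdfu⟩ := (hC1 u u).mpr rfl
    obtain ⟨fv, hfv, hdfv⟩ := (hC1 v v).mpr rfl
    obtain ⟨du, hdu, hddu⟩ := (hC2 u u).mpr rfl
    obtain ⟨dv, hdv, hddv⟩ := (hC2 v v).mpr rfl
    have heu : e = fu := lemB2 hmu he hde hfu hdfu
    have hev : e = fv := lemB2 hmv he hde hfv hdfv
    obtain ⟨_, hdufu⟩ := lemB hu (idem hu) hdu hddu hfu hdfu
    obtain ⟨hmdv, hdvfv⟩ := lemB hv (idem hv) hdv hddv hfv hdfv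
    have hdue : du = e := hdufu.trans heu.symm
    have hdve : dv = e := hdvfv.trans hev.symm
    have hdu_e : δ u u e := hdue ▸ hddu
    have hmev : μ e v e := hdve ▸ hmdv
    obtain ⟨t, ht1, ht2⟩ := (hF1 u v u e).mp ⟨e, hdu_e, hmev⟩
    exact (cU2 hv ht1).trans (cU1 hu ht1).symm
  constructor
  · obtain ⟨u, hu, hm⟩ := (hU2 x x).mpr rfl
    exact ⟨u, ⟨hu, hm⟩, fun y ⟨hy, hmy⟩ => uniq1 hy hmy hu hm⟩
  · obtain ⟨u, hu, hm⟩ := (hU1 x x).mpr rfl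
    exact ⟨u, ⟨hu, hm⟩, fun y ⟨hy, hmy⟩ => uniq2 hy hmy hu hm⟩
end

section
/- Let (X, ε, η, δ, μ) be a Frobenius object in Rel with source and target maps s, t : X → η (s(x) is the unique element of η with (x, s(x), x) ∈ μ; t(x) is the unique element of η with (t(x), x, x) ∈ μ), and associated bijection f. Then s = t ∘ f. -/
/-- For a Frobenius object in Rel with source and target maps
s, t and associated bijection f, we have s = t ∘ f. -/
theorem stmt10 {X : Type*} (ε η : X → Prop) (δ μ : X → X → X → Prop)
    (s t f : X → X)
    (hU1 : ∀ x z, (∃ u, η u ∧ μ u x z) ↔ x = z)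
    (hU2 : ∀ x z, (∃ u, η u ∧ μ x u z) ↔ x = z)
    (hC1 : ∀ x z, (∃ w, ε w ∧ δ x w z) ↔ x = z)
    (hC2 : ∀ x z, (∃ w, ε w ∧ δ x z w) ↔ x = z)
    (hF1 : ∀ x₁ x₂ x₃ x₄,
      (∃ w, δ x₁ x₃ w ∧ μ w x₂ x₄) ↔ (∃ w, μ x₁ x₂ w ∧ δ w x₃ x₄))
    (hF2 : ∀ x₁ x₂ x₃ x₄,
      (∃ w, μ x₁ x₂ w ∧ δ w x₃ x₄) ↔ (∃ w, δ x₂ x₃ w ∧ μ x₁ w x₄))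
    (hs : ∀ x, η (s x) ∧ μ x (s x) x)
    (hs_uniq : ∀ x u, η u → μ x u x → u = s x)
    (ht : ∀ x, η (t x) ∧ μ (t x) x x)
    (ht_uniq : ∀ x u, η u → μ u x x → u = t x)
    (hf : Function.Bijective f)
    (hrot : ∀ x y z, μ x y z ↔ μ y (f z) (f x)) :
    ∀ x, s x = t (f x) := by
  intro x
  exact ht_uniq (f x) (s x) (hs x).1 ((hrot x (s x) x).mp (hs x).2)
end

section
/- Let (X, ε, η, δ, μ) be a Frobenius object in Rel with source and target maps s, t : X → η. If (x, y, z) ∈ μ, then s(x) = t(y), s(y) = s(z), and t(x) = t(z). -/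
/-- For a Frobenius object in Rel with source and target maps
s, t: if (x,y,z) ∈ μ, then s x = t y, s y = s z, and t x = t z. -/
theorem stmt11 {X : Type*} (ε η : X → Prop) (δ μ : X → X → X → Prop)
    (s t f : X → X)
    (hU1 : ∀ x z, (∃ u, η u ∧ μ u x z) ↔ x = z)
    (hU2 : ∀ x z, (∃ u, η u ∧ μ x u z) ↔ x = z)
    (hC1 : ∀ x z, (∃ w, ε w ∧ δ x w z) ↔ x = z)
    (hC2 : ∀ x z, (∃ w, ε w ∧ δ x z w) ↔ x = z)
    (hF1 : ∀ x₁ x₂ x₃ x₄,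
      (∃ w, δ x₁ x₃ w ∧ μ w x₂ x₄) ↔ (∃ w, μ x₁ x₂ w ∧ δ w x₃ x₄))
    (hF2 : ∀ x₁ x₂ x₃ x₄,
      (∃ w, μ x₁ x₂ w ∧ δ w x₃ x₄) ↔ (∃ w, δ x₂ x₃ w ∧ μ x₁ w x₄))
    (hs : ∀ x, η (s x) ∧ μ x (s x) x)
    (hs_uniq : ∀ x u, η u → μ x u x → u = s x)
    (ht : ∀ x, η (t x) ∧ μ (t x) x x)
    (ht_uniq : ∀ x u, η u → μ u x x → u = t x)
    (hf : Function.Bijective f)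
    (hrot : ∀ x y z, μ x y z ↔ μ y (f z) (f x))
    (hst : ∀ x, s x = t (f x)) :
    ∀ x y z, μ x y z → s x = t y ∧ s y = s z ∧ t x = t z := by
  -- Main lemma: along any μ-triple, the target of the first argument equals
  -- the target of the output.
  have T : ∀ a b c, μ a b c → t a = t c := by
    intro a b c habc
    -- counit element for c : δ c c e1 with ε e1
    obtain ⟨e1, he1, hd1⟩ := (hC2 c c).mpr rfl
    -- Frobenius (hF1, backwards): get k with δ a c k and μ k b e1
    obtain ⟨k, hk1, hk2⟩ := (hF1 a b c e1).mpr ⟨c, habc, hd1⟩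
    -- the target unit u = t a
    obtain ⟨hu, hua⟩ := ht a
    -- Frobenius (hF1, backwards) with μ (t a) a a and δ a c k:
    -- get d with δ (t a) c d and μ d a k
    obtain ⟨d, hd, hdk⟩ := (hF1 (t a) a c k).mpr ⟨a, hua, hk1⟩
    -- counit element for k : δ k k e2 with ε e2
    obtain ⟨e2, he2, hd2⟩ := (hC2 k k).mpr rfl
    -- Frobenius (hF2, forwards) with μ d a k and δ k k e2:
    -- get q with δ a k q and μ d q e2
    obtain ⟨q, hq1, hq2⟩ := (hF2 d a k e2).mp ⟨k, hdk, hd2⟩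
    -- Frobenius (hF1, forwards) with δ (t a) c d and μ d q e2:
    -- get r with μ (t a) q r and δ r c e2
    obtain ⟨r, hr1, hr2⟩ := (hF1 (t a) q c e2).mp ⟨d, hd, hq2⟩
    -- ε e2 and δ r c e2 force r = c
    have hrc : r = c := (hC2 r c).mp ⟨e2, he2, hr2⟩
    rw [hrc] at hr1
    -- η (t a) and μ (t a) q c force q = c
    have hqc : q = c := (hU1 q c).mp ⟨t a, hu, hr1⟩
    rw [hqc] at hr1
    -- so μ (t a) c c, hence t a = t c by uniqueness
    exact ht_uniq c (t a) hu hr1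
  intro x y z hxyz
  have h2 : μ y (f z) (f x) := (hrot x y z).mp hxyz
  have h3 : μ (f z) (f (f x)) (f y) := (hrot y (f z) (f x)).mp h2
  refine ⟨?_, ?_, T x y z hxyz⟩
  · rw [hst x]
    exact (T y (f z) (f x) h2).symm
  · rw [hst y, hst z]
    exact (T (f z) (f (f x)) (f y) h3).symm
end

section
/- Let X be a commutative Frobenius object in Rel (i.e., (x,y,z) ∈ μ iff (y,x,z) ∈ μ). Then δ is cocommutative: (x,y,z) ∈ δ iff (x,z,y) ∈ δ. -/
/-- For a commutative Frobenius object in Rel, δ is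
cocommutative: (x,y,z) ∈ δ ↔ (x,z,y) ∈ δ. -/
theorem stmt12 {X : Type*} (ε η : X → Prop) (δ μ : X → X → X → Prop)
    (f g : X → X)
    (hU1 : ∀ x z, (∃ u, η u ∧ μ u x z) ↔ x = z)
    (hU2 : ∀ x z, (∃ u, η u ∧ μ x u z) ↔ x = z)
    (hC1 : ∀ x z, (∃ w, ε w ∧ δ x w z) ↔ x = z)
    (hC2 : ∀ x z, (∃ w, ε w ∧ δ x z w) ↔ x = z)
    (hF1 : ∀ x₁ x₂ x₃ x₄,
      (∃ w, δ x₁ x₃ w ∧ μ w x₂ x₄) ↔ (∃ w, μ x₁ x₂ w ∧ δ w x₃ x₄))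
    (hF2 : ∀ x₁ x₂ x₃ x₄,
      (∃ w, μ x₁ x₂ w ∧ δ w x₃ x₄) ↔ (∃ w, δ x₂ x₃ w ∧ μ x₁ w x₄))
    (hcomm : ∀ x y z, μ x y z ↔ μ y x z)
    (hf : Function.Bijective f)
    (hgf : ∀ x, g (f x) = x) (hfg : ∀ x, f (g x) = x)
    (hmd1 : ∀ x y z, μ x y z ↔ δ y (f x) z)
    (hmd2 : ∀ x y z, μ x y z ↔ δ x z (g y)) :
    ∀ x y z, δ x y z ↔ δ x z y := by
  -- S : δ y (f x) z ↔ δ y z (g x), from commutativity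
  have hS : ∀ x y z, δ y (f x) z ↔ δ y z (g x) := fun x y z =>
    ((hmd1 x y z).symm.trans (hcomm x y z)).trans (hmd2 y x z)
  -- E : δ a b c ↔ δ a c (g (g b))
  have hE : ∀ a b c, δ a b c ↔ δ a c (g (g b)) := by
    intro a b c
    have := hS (g b) a c
    rwa [hfg b] at this
  -- g ∘ g = id
  have hg2 : ∀ x, g (g x) = x := by
    intro x
    obtain ⟨w, hw, hd⟩ := (hC2 x x).mpr rfl
    have : δ x w (g (g x)) := (hE x x w).mp hd
    exact ((hC1 x (g (g x))).mp ⟨w, hw, this⟩).symm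
  intro x y z
  rw [hE x y z, hg2 y]
end

section
/- Let X be a commutative Frobenius object in Rel with associated bijection f. Then f is an involution: f(f(x)) = x for all x ∈ X. -/
/-- For a commutative Frobenius object in Rel, the associated
bijection f is an involution. -/
theorem stmt13 {X : Type*} (ε η : X → Prop) (δ μ : X → X → X → Prop)
    (f : X → X)
    (hU1 : ∀ x z, (∃ u, η u ∧ μ u x z) ↔ x = z)
    (hU2 : ∀ x z, (∃ u, η u ∧ μ x u z) ↔ x = z)
    (hC1 : ∀ x z, (∃ w, ε w ∧ δ x w z) ↔ x = z)
    (hC2 : ∀ x z, (∃ w, ε w ∧ δ x z w) ↔ x = z)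
    (hF1 : ∀ x₁ x₂ x₃ x₄,
      (∃ w, δ x₁ x₃ w ∧ μ w x₂ x₄) ↔ (∃ w, μ x₁ x₂ w ∧ δ w x₃ x₄))
    (hF2 : ∀ x₁ x₂ x₃ x₄,
      (∃ w, μ x₁ x₂ w ∧ δ w x₃ x₄) ↔ (∃ w, δ x₂ x₃ w ∧ μ x₁ w x₄))
    (hcomm : ∀ x y z, μ x y z ↔ μ y x z)
    (hf : Function.Bijective f)
    (hα : ∀ x y, (∃ z, μ x y z ∧ ε z) ↔ y = f x) :
    ∀ x, f (f x) = x := by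
  intro x
  obtain ⟨z, hz, hε⟩ := (hα x (f x)).mpr rfl
  exact ((hα (f x) x).mp ⟨z, (hcomm x (f x) z).mp hz, hε⟩).symm
end
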